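/- arXiv:1912.02642 — 2 statements merged into one kernel-verified Lean document; each statement's English description precedes it below -/
import Mathlib

section
/- (Cline's formula) Let A be a complex unital Banach algebra and a, b ∈ A. If ab has a generalized Drazin inverse c, then ba has a generalized Drazin inverse, given by b c² a. -/
variable {𝔸 : Type*} [NormedRing 𝔸] [NormedAlgebra ℂ 𝔸] [CompleteSpace 𝔸]

/-- Quasinilpotent: spectral radius zero. -/
def IsQuasinilpotent (a : 𝔸) : Prop := spectralRadius ℂ a = 0

/-- `b` is a g-Drazin inverse of `a`. -/
def IsGDrazinInverse (a b : 𝔸) : Prop :=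
  Commute a b ∧ b * a * b = b ∧ IsQuasinilpotent (a - a ^ 2 * b)

/-! With `d = b c² a`, the identities `(ba) d = b (ab c²) a`, `d (ba) = b (c² ab) a` and
`d (ba) d = b (c² (ab)² c²) a` reduce the first two conditions to those for `c`. For the third, `ba - (ba)² d = b r` with
`r b = ab - (ab)³ c² = (1 + abc) (ab - (ab)² c)`. Swapping the factors of `b r` does not change
the spectral radius, and by Gelfand's formula the spectral radius is submultiplicative on
commuting elements, so `r b` is quasinilpotent as a multiple of the quasinilpotent
`ab - (ab)² c` by an element commuting with it. -/

open ENNReal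

section Monoid

variable {M : Type*} [Monoid M]

theorem Commute.sq_mul_sq_mul_sq {t c : M} (h : Commute t c) (hc : c * t * c = c) :
    c ^ 2 * t ^ 2 * c ^ 2 = c ^ 2 := by
  calc c ^ 2 * t ^ 2 * c ^ 2 = c * (c * t) * t * c * c := by simp only [sq, mul_assoc]
    _ = c * (t * c) * t * c * c := by rw [h.eq]
    _ = c ^ 2 := by rw [← mul_assoc c t c, hc, hc, sq]

variable {a b c : M}

theorem Commute.mul_mul_sq_mul (h : Commute (a * b) c) : Commute (b * a) (b * c ^ 2 * a) := by
  calc b * a * (b * c ^ 2 * a) = b * (a * b * c ^ 2) * a := by simp only [mul_assoc]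
    _ = b * (c ^ 2 * (a * b)) * a := by rw [(h.pow_right 2).eq]
    _ = b * c ^ 2 * a * (b * a) := by simp only [mul_assoc]

theorem mul_sq_mul_mul_mul_sq_mul (h : Commute (a * b) c) (hc : c * (a * b) * c = c) :
    b * c ^ 2 * a * (b * a) * (b * c ^ 2 * a) = b * c ^ 2 * a := by
  calc b * c ^ 2 * a * (b * a) * (b * c ^ 2 * a) = b * (c ^ 2 * (a * b) ^ 2 * c ^ 2) * a := by
        simp only [sq, mul_assoc]
    _ = b * c ^ 2 * a := by rw [h.sq_mul_sq_mul_sq hc, mul_assoc]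

end Monoid

section Ring

variable {R : Type*} [Ring R]

theorem Commute.sub_pow_three_mul_sq {t c : R} (h : Commute t c) :
    t - t ^ 3 * c ^ 2 = (1 + t * c) * (t - t ^ 2 * c) := by
  have h₁ : t * c * t = t ^ 2 * c := by rw [mul_assoc, ← h.eq, ← mul_assoc, sq]
  have h₂ : t * c * (t ^ 2 * c) = t ^ 3 * c ^ 2 := by
    rw [← mul_assoc, mul_assoc t, ← (h.pow_left 2).eq]; noncomm_ring
  calc t - t ^ 3 * c ^ 2 = t - t ^ 2 * c + (t * c * t - t * c * (t ^ 2 * c)) := by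
        rw [h₁, h₂]; abel
    _ = (1 + t * c) * (t - t ^ 2 * c) := by noncomm_ring

theorem Commute.one_add_mul_sub_sq_mul {t c : R} (h : Commute t c) :
    Commute (1 + t * c) (t - t ^ 2 * c) := by
  have htc : Commute (t * c) t := (Commute.refl t).mul_left h.symm
  have htcc : Commute (t * c) c := h.mul_left (Commute.refl c)
  exact ((Commute.one_left _).add_left htc).sub_right
    ((Commute.one_left _).add_left ((htc.pow_right 2).mul_right htcc))

variable {a b c : R}

theorem mul_sub_sq_mul_mul_sq_mul :
    b * a - (b * a) ^ 2 * (b * c ^ 2 * a) = b * (a - (a * b) ^ 2 * c ^ 2 * a) := by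
  noncomm_ring

theorem Commute.sub_sq_mul_sq_mul_mul (h : Commute (a * b) c) :
    (a - (a * b) ^ 2 * c ^ 2 * a) * b = a * b - (a * b) ^ 3 * c ^ 2 := by
  calc (a - (a * b) ^ 2 * c ^ 2 * a) * b = a * b - (a * b) ^ 2 * (c ^ 2 * (a * b)) := by
        noncomm_ring
    _ = a * b - (a * b) ^ 3 * c ^ 2 := by rw [← (h.pow_right 2).eq]; noncomm_ring

end Ring

theorem spectralRadius_mul_comm_le {𝕜 A : Type*} [NormedField 𝕜] [Ring A] [Algebra 𝕜 A]
    (x y : A) : spectralRadius 𝕜 (x * y) ≤ spectralRadius 𝕜 (y * x) := by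
  refine iSup₂_le fun k hk => ?_
  rcases eq_or_ne k 0 with rfl | hk0
  · simp
  · have hk' : k ∈ spectrum 𝕜 (x * y) \ {0} := ⟨hk, hk0⟩
    rw [spectrum.nonzero_mul_comm] at hk'
    exact le_iSup₂ (f := fun k (_ : k ∈ spectrum 𝕜 (y * x)) => (‖k‖₊ : ℝ≥0∞)) k hk'.1

theorem spectralRadius_mul_comm {𝕜 A : Type*} [NormedField 𝕜] [Ring A] [Algebra 𝕜 A]
    (x y : A) : spectralRadius 𝕜 (x * y) = spectralRadius 𝕜 (y * x) :=
  le_antisymm (spectralRadius_mul_comm_le x y) (spectralRadius_mul_comm_le y x)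

theorem spectralRadius_ne_top (x : 𝔸) : spectralRadius ℂ x ≠ ∞ :=
  ne_top_of_le_ne_top (by simp [mul_ne_top])
    (spectrum.spectralRadius_le_pow_nnnorm_pow_one_div ℂ x 0)

theorem Commute.spectralRadius_mul_le {x y : 𝔸} (h : Commute x y) :
    spectralRadius ℂ (x * y) ≤ spectralRadius ℂ x * spectralRadius ℂ y := by
  refine le_of_tendsto_of_tendsto' (spectrum.pow_nnnorm_pow_one_div_tendsto_nhds_spectralRadius _)
    (ENNReal.Tendsto.mul (spectrum.pow_nnnorm_pow_one_div_tendsto_nhds_spectralRadius x)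
      (Or.inr (spectralRadius_ne_top y))
      (spectrum.pow_nnnorm_pow_one_div_tendsto_nhds_spectralRadius y)
      (Or.inr (spectralRadius_ne_top x))) fun n => ?_
  rw [h.mul_pow, ← ENNReal.mul_rpow_of_nonneg _ _ (by positivity)]
  gcongr
  exact_mod_cast nnnorm_mul_le _ _

theorem Commute.isQuasinilpotent_mul_left {x y : 𝔸} (h : Commute x y) (hy : IsQuasinilpotent y) :
    IsQuasinilpotent (x * y) :=
  nonpos_iff_eq_zero.mp <| h.spectralRadius_mul_le.trans_eq <| by
    rw [show spectralRadius ℂ y = 0 from hy, mul_zero]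

/-- Cline's formula: if `c` is a g-Drazin inverse of `a*b`,
then `b*c²*a` is a g-Drazin inverse of `b*a`. -/
theorem cline_formula (a b c : 𝔸) (h : IsGDrazinInverse (a * b) c) :
    IsGDrazinInverse (b * a) (b * c ^ 2 * a) := by
  obtain ⟨hcomm, hinner, hq⟩ := h
  refine ⟨hcomm.mul_mul_sq_mul, mul_sq_mul_mul_mul_sq_mul hcomm hinner, ?_⟩
  unfold IsQuasinilpotent
  rw [mul_sub_sq_mul_mul_sq_mul, spectralRadius_mul_comm, hcomm.sub_sq_mul_sq_mul_mul,
    hcomm.sub_pow_three_mul_sq]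
  exact hcomm.one_add_mul_sub_sq_mul.isQuasinilpotent_mul_left hq
end

section
/- Let A be a complex unital Banach algebra, a, b ∈ A with g-Drazin inverses, λ ≠ 0, and suppose ab = λ a^π b a b^π. Then (a+b)^d = b^π a^d + b^d a^π + Σ_{n≥0} (b^d)^{n+2} a (a+b)^n a^π + b^π Σ_{n≥0} (a+b)^n b (a^d)^{n+2} − Σ_{n≥0} Σ_{k≥0} (b^d)^{k+1} a (a+b)^{n+k} b (a^d)^{n+2} − Σ_{n≥0} (b^d)^{n+2} a (a+b)^n b a^d. -/
/-
The hypothesis forces `ad * b = 0` and `a * bd = 0`, after which it reads `a * b = λ • (b * a)`.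
Then `u = b * a * ad` satisfies `u = (a - a² ad) * u * (λ⁻¹ • ad)`, and iterating this against the
quasinilpotent element `a - a² ad` forces `u = 0`, i.e. `b * ad = 0`; symmetrically `bd * a = 0`.
So every series in the formula vanishes termwise and the formula reduces to `ad + bd`. This is a
g-Drazin inverse of `a + b` because the quasinilpotent parts of `a` and `b` still `λ`-commute, and a
sum of `λ`-commuting quasinilpotents is quasinilpotent: for `|λ| ≤ 1` the `q`-binomial expansion of
`(x + y)ⁿ` has coefficients bounded by the ordinary binomial ones.
-/

variable {𝔸 : Type*} [NormedRing 𝔸] [NormedAlgebra ℂ 𝔸] [CompleteSpace 𝔸]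

section GaussBinom

open Finset

variable {R : Type*} [CommSemiring R]

-- Gaussian binomial coefficients `[n, k]_q`, defined by the `q`-Pascal rule.
def gaussBinom (q : R) : ℕ → ℕ → R
  | _, 0 => 1
  | 0, _ + 1 => 0
  | n + 1, k + 1 => q ^ (n - k) * gaussBinom q n k + gaussBinom q n (k + 1)

theorem gaussBinom_eq_zero_of_lt (q : R) {n k : ℕ} (h : n < k) : gaussBinom q n k = 0 := by
  induction n generalizing k with
  | zero => obtain ⟨k, rfl⟩ := Nat.exists_eq_add_one_of_ne_zero h.ne'; rfl
  | succ n ih =>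
    obtain ⟨k, rfl⟩ := Nat.exists_eq_add_one_of_ne_zero (Nat.ne_zero_of_lt h)
    simp only [gaussBinom, ih (by omega : n < k), ih (by omega : n < k + 1), mul_zero, add_zero]

theorem mul_pow_eq_smul_pow_mul {A : Type*} [Semiring A] [Algebra R A] {q : R} {x y : A}
    (h : x * y = q • (y * x)) (m : ℕ) : x * y ^ m = q ^ m • (y ^ m * x) := by
  induction m with
  | zero => simp
  | succ m ih =>
    rw [pow_succ', ← mul_assoc, h, smul_mul_assoc, mul_assoc, ih, mul_smul_comm, smul_smul,
      ← mul_assoc, ← pow_succ', ← pow_succ']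

theorem add_pow_eq_sum_gaussBinom {A : Type*} [Semiring A] [Algebra R A] {q : R} {x y : A}
    (h : x * y = q • (y * x)) (n : ℕ) :
    (x + y) ^ n = ∑ k ∈ range (n + 1), gaussBinom q n k • (y ^ (n - k) * x ^ k) := by
  induction n with
  | zero => simp [gaussBinom]
  | succ n ih =>
    have hx : x * (x + y) ^ n = ∑ k ∈ range (n + 1),
        (q ^ (n - k) * gaussBinom q n k) • (y ^ (n - k) * x ^ (k + 1)) := by
      rw [ih, mul_sum]
      refine sum_congr rfl fun k _ => ?_
      rw [mul_smul_comm, ← mul_assoc, mul_pow_eq_smul_pow_mul h, smul_mul_assoc, mul_assoc,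
        ← pow_succ', smul_smul, mul_comm]
    have hy : y * (x + y) ^ n = ∑ k ∈ range (n + 1),
        gaussBinom q n (k + 1) • (y ^ (n - k) * x ^ (k + 1)) + y ^ (n + 1) := by
      calc y * (x + y) ^ n
          = ∑ k ∈ range (n + 2), gaussBinom q n k • (y ^ (n + 1 - k) * x ^ k) := by
            rw [sum_range_succ, gaussBinom_eq_zero_of_lt q (Nat.lt_succ_self n), zero_smul,
              add_zero, ih, mul_sum]
            refine sum_congr rfl fun k hk => ?_
            rw [mul_smul_comm, ← mul_assoc, ← pow_succ',
              Nat.sub_add_comm (mem_range_succ_iff.1 hk)]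
        _ = _ := by simp [sum_range_succ' _ (n + 1), gaussBinom]
    rw [pow_succ', add_mul, hx, hy, sum_range_succ' _ (n + 1)]
    simp only [gaussBinom, add_smul, sum_add_distrib, Nat.add_sub_add_right, one_smul, pow_zero,
      mul_one, Nat.sub_zero, add_assoc]

theorem norm_gaussBinom_le {𝕜 : Type*} [NormedField 𝕜] {q : 𝕜} (hq : ‖q‖ ≤ 1) (n k : ℕ) :
    ‖gaussBinom q n k‖ ≤ n.choose k := by
  induction n generalizing k with
  | zero => cases k <;> simp [gaussBinom]
  | succ n ih =>
    cases k with
    | zero => simp [gaussBinom]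
    | succ k =>
      calc ‖gaussBinom q (n + 1) (k + 1)‖
          ≤ ‖q‖ ^ (n - k) * ‖gaussBinom q n k‖ + ‖gaussBinom q n (k + 1)‖ := by
            simpa only [gaussBinom, norm_mul, norm_pow] using
              norm_add_le (q ^ (n - k) * gaussBinom q n k) (gaussBinom q n (k + 1))
        _ ≤ 1 * n.choose k + n.choose (k + 1) := by
            gcongr
            · exact pow_le_one₀ (norm_nonneg q) hq
            · exact ih k
            · exact ih (k + 1)
        _ = (n + 1).choose (k + 1) := by push_cast [Nat.choose_succ_succ']; ring

end GaussBinom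

theorem eq_pow_mul_mul_pow_of_eq_mul_mul {M : Type*} [Monoid M] {q x c : M} (h : x = q * x * c)
    (n : ℕ) : x = q ^ n * x * c ^ n := by
  induction n with
  | zero => simp
  | succ n ih =>
    calc x = q ^ n * (q * x * c) * c ^ n := by rw [← h, ← ih]
      _ = q ^ (n + 1) * x * c ^ (n + 1) := by rw [pow_succ, pow_succ']; simp only [mul_assoc]

theorem eq_zero_of_eq_mul_mul_of_exists_norm_pow_mul_lt_one {R : Type*} [NormedRing R]
    {q x c : R} (h : x = q * x * c) (hn : ∃ n, ‖q ^ n‖ * ‖c ^ n‖ < 1) : x = 0 := by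
  obtain ⟨n, hn⟩ := hn
  have hx : ‖x‖ ≤ ‖q ^ n‖ * ‖x‖ * ‖c ^ n‖ := by
    conv_lhs => rw [eq_pow_mul_mul_pow_of_eq_mul_mul h n]
    exact norm_mul₃_le
  exact norm_le_zero_iff.1 (by nlinarith [norm_nonneg x])

section Quasinilpotent

open Filter Finset

variable {A : Type*} [NormedRing A] [NormedAlgebra ℂ A] [CompleteSpace A]

theorem isQuasinilpotent_iff_eventually_norm_pow_le {z : A} :
    IsQuasinilpotent z ↔ ∀ ε > 0, ∀ᶠ n in atTop, ‖z ^ n‖ ≤ ε ^ n := by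
  have gelfand := spectrum.pow_norm_pow_one_div_tendsto_nhds_spectralRadius z
  constructor
  · intro hz ε hε
    rw [IsQuasinilpotent] at hz
    rw [hz] at gelfand
    filter_upwards [gelfand.eventually (gt_mem_nhds (ENNReal.ofReal_pos.2 hε)),
      eventually_ne_atTop 0] with n hn hn0
    rw [ENNReal.ofReal_lt_ofReal_iff hε, one_div] at hn
    rw [← Real.rpow_inv_natCast_pow (norm_nonneg (z ^ n)) hn0]
    exact pow_le_pow_left₀ (by positivity) hn.le n
  · intro h
    refine le_antisymm (ENNReal.le_of_forall_pos_le_add fun ε hε _ => ?_) bot_le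
    rw [zero_add, ← ENNReal.ofReal_coe_nnreal]
    refine le_of_tendsto gelfand ?_
    filter_upwards [h ε hε, eventually_ne_atTop 0] with n hn hn0
    refine ENNReal.ofReal_le_ofReal ?_
    calc ‖z ^ n‖ ^ (1 / n : ℝ) ≤ ((ε : ℝ) ^ n) ^ (n⁻¹ : ℝ) := by
          rw [one_div]; exact Real.rpow_le_rpow (norm_nonneg _) hn (by positivity)
      _ = ε := Real.pow_rpow_inv_natCast ε.coe_nonneg hn0

theorem isQuasinilpotent_iff_forall_norm_pow_le {z : A} :
    IsQuasinilpotent z ↔ ∀ ε > 0, ∃ C, ∀ n, ‖z ^ n‖ ≤ C * ε ^ n := by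
  rw [isQuasinilpotent_iff_eventually_norm_pow_le]
  refine ⟨fun h ε hε => ?_, fun h ε hε => ?_⟩
  · have hO : (fun n => ‖z ^ n‖) =O[atTop] (fun n => ε ^ n) :=
      Asymptotics.IsBigO.of_bound 1 (by simpa [abs_of_pos hε] using h ε hε)
    obtain ⟨C, -, hC⟩ := Asymptotics.bound_of_isBigO_nat_atTop hO
    exact ⟨C, fun n => by simpa [abs_of_pos hε] using hC (pow_ne_zero n hε.ne')⟩
  · obtain ⟨C, hC⟩ := h (ε / 2) (by positivity)
    filter_upwards [(tendsto_pow_atTop_atTop_of_one_lt one_lt_two).eventually_ge_atTop C]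
      with n hn
    calc ‖z ^ n‖ ≤ C * (ε / 2) ^ n := hC n
      _ ≤ 2 ^ n * (ε / 2) ^ n := by gcongr
      _ = ε ^ n := by rw [← mul_pow]; ring

theorem IsQuasinilpotent.exists_norm_pow_mul_norm_pow_lt_one {q : A} (hq : IsQuasinilpotent q)
    (c : A) : ∃ n, ‖q ^ n‖ * ‖c ^ n‖ < 1 := by
  set ε := 1 / (‖c‖ + 1)
  obtain ⟨n, hn, hn0⟩ := ((isQuasinilpotent_iff_eventually_norm_pow_le.1 hq ε (by positivity)).and
    (eventually_ne_atTop 0)).exists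
  refine ⟨n, ?_⟩
  calc ‖q ^ n‖ * ‖c ^ n‖ ≤ ε ^ n * ‖c‖ ^ n :=
        mul_le_mul hn (norm_pow_le' c (Nat.pos_of_ne_zero hn0)) (norm_nonneg _) (by positivity)
    _ = (‖c‖ / (‖c‖ + 1)) ^ n := by rw [← mul_pow]; ring
    _ < 1 := pow_lt_one₀ (by positivity) ((div_lt_one (by positivity)).2 (by linarith)) hn0

theorem IsQuasinilpotent.add_of_mul_eq_smul_mul_of_norm_le_one {x y : A} {μ : ℂ} (hμ : ‖μ‖ ≤ 1)
    (hxy : x * y = μ • (y * x)) (hx : IsQuasinilpotent x) (hy : IsQuasinilpotent y) :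
    IsQuasinilpotent (x + y) := by
  rw [isQuasinilpotent_iff_forall_norm_pow_le] at hx hy ⊢
  intro ε hε
  obtain ⟨Cx, hCx⟩ := hx (ε / 2) (by positivity)
  obtain ⟨Cy, hCy⟩ := hy (ε / 2) (by positivity)
  have hCy0 : 0 ≤ Cy := by simpa using (norm_nonneg _).trans (hCy 0)
  refine ⟨Cx * Cy, fun n => ?_⟩
  rw [add_pow_eq_sum_gaussBinom hxy]
  calc ‖∑ k ∈ range (n + 1), gaussBinom μ n k • (y ^ (n - k) * x ^ k)‖
      ≤ ∑ k ∈ range (n + 1), ‖gaussBinom μ n k‖ * (‖y ^ (n - k)‖ * ‖x ^ k‖) :=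
        norm_sum_le_of_le _ fun k _ =>
          (norm_smul_le _ _).trans (mul_le_mul_of_nonneg_left (norm_mul_le _ _) (norm_nonneg _))
    _ ≤ ∑ k ∈ range (n + 1),
          (n.choose k : ℝ) * ((Cy * (ε / 2) ^ (n - k)) * (Cx * (ε / 2) ^ k)) := by
        gcongr with k
        · exact norm_gaussBinom_le hμ n k
        · exact hCy _
        · exact hCx _
    _ = Cx * Cy * ∑ k ∈ range (n + 1), (ε / 2) ^ k * (ε / 2) ^ (n - k) * (n.choose k : ℝ) := by
        rw [mul_sum]; exact sum_congr rfl fun k _ => by ring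
    _ = Cx * Cy * ε ^ n := by rw [← add_pow, add_halves]

theorem IsQuasinilpotent.add_of_mul_eq_smul_mul {x y : A} {μ : ℂ} (hxy : x * y = μ • (y * x))
    (hx : IsQuasinilpotent x) (hy : IsQuasinilpotent y) : IsQuasinilpotent (x + y) := by
  rcases le_or_gt ‖μ‖ 1 with hμ | hμ
  · exact hx.add_of_mul_eq_smul_mul_of_norm_le_one hμ hxy hy
  · have hμ0 : μ ≠ 0 := norm_pos_iff.1 (one_pos.trans hμ)
    have hyx : y * x = μ⁻¹ • (x * y) := by rw [hxy, inv_smul_smul₀ hμ0]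
    rw [add_comm]
    exact hy.add_of_mul_eq_smul_mul_of_norm_le_one
      (by rw [norm_inv]; exact inv_le_one_of_one_le₀ hμ.le) hyx hx

theorem IsQuasinilpotent.eq_zero_of_eq_mul_mul_left {q x c : A} (hq : IsQuasinilpotent q)
    (h : x = q * x * c) : x = 0 :=
  eq_zero_of_eq_mul_mul_of_exists_norm_pow_mul_lt_one h (hq.exists_norm_pow_mul_norm_pow_lt_one c)

theorem IsQuasinilpotent.eq_zero_of_eq_mul_mul_right {q x c : A} (hc : IsQuasinilpotent c)
    (h : x = q * x * c) : x = 0 := by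
  obtain ⟨n, hn⟩ := hc.exists_norm_pow_mul_norm_pow_lt_one q
  exact eq_zero_of_eq_mul_mul_of_exists_norm_pow_mul_lt_one h ⟨n, by rwa [mul_comm]⟩

end Quasinilpotent

theorem sub_sq_mul_mul_sub_sq_mul_eq_mul {R : Type*} [Ring R] {a ad b bd : R}
    (hbc : Commute b bd) (hadb : ad * b = 0) (habd : a * bd = 0) :
    (a - a ^ 2 * ad) * (b - b ^ 2 * bd) = a * b := by
  have h2 : a * (b ^ 2 * bd) = 0 := by rw [(hbc.pow_left 2).eq, ← mul_assoc, habd, zero_mul]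
  have h3 : ad * (b ^ 2 * bd) = 0 := by rw [sq, mul_assoc, ← mul_assoc ad, hadb, zero_mul]
  rw [mul_sub, sub_mul, sub_mul, h2, mul_assoc (a ^ 2) ad b, hadb, mul_assoc (a ^ 2) ad, h3]
  simp

namespace IsGDrazinInverse

variable {A : Type*} [NormedRing A] [NormedAlgebra ℂ A] {a ad b bd u : A} {c : ℂ}

theorem mul_mul_self_eq (ha : IsGDrazinInverse a ad) : a * ad * ad = ad := by
  rw [ha.1.eq]; exact ha.2.1

theorem mul_self_mul_eq (ha : IsGDrazinInverse a ad) : ad * ad * a = ad := by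
  rw [mul_assoc, ← ha.1.eq, ← mul_assoc]; exact ha.2.1

theorem isIdempotentElem_mul (ha : IsGDrazinInverse a ad) : IsIdempotentElem (a * ad) := by
  rw [IsIdempotentElem, mul_assoc, ← mul_assoc ad, ha.2.1]

theorem mul_inv_eq_zero_of_mul_eq_smul_mul_one_sub (hb : IsGDrazinInverse b bd)
    (h : a * b = c • (u * (1 - b * bd))) : a * bd = 0 := by
  have habbd : a * b * bd = 0 := by
    rw [h, smul_mul_assoc, mul_assoc, sub_mul, one_mul, hb.mul_mul_self_eq, sub_self, mul_zero,
      smul_zero]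
  rw [← hb.mul_mul_self_eq, ← mul_assoc, ← mul_assoc, habbd, zero_mul]

theorem inv_mul_eq_zero_of_mul_eq_smul_one_sub_mul (ha : IsGDrazinInverse a ad)
    (h : a * b = c • ((1 - a * ad) * u)) : ad * b = 0 := by
  have hP : a * ad * (a * b) = 0 := by
    rw [h, mul_smul_comm, ← mul_assoc, ha.isIdempotentElem_mul.mul_one_sub_self, zero_mul,
      smul_zero]
  have hadad : ad * ad * (a * ad) = ad * ad := by rw [← mul_assoc, ha.mul_self_mul_eq]
  calc ad * b = ad * ad * (a * b) := by rw [← mul_assoc, ha.mul_self_mul_eq]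
    _ = ad * ad * (a * ad) * (a * b) := by rw [hadad]
    _ = 0 := by rw [mul_assoc (ad * ad), hP, mul_zero]

theorem mul_inv_eq_zero_of_inv_mul_eq_zero [CompleteSpace A] (ha : IsGDrazinInverse a ad)
    (hc : c ≠ 0) (hadb : ad * b = 0) (hab : a * b = c • (b * a)) : b * ad = 0 := by
  have hfix : b * a * ad = (a - a ^ 2 * ad) * (b * a * ad) * (c⁻¹ • ad) := by
    calc b * a * ad = c⁻¹ • (a * b * ad) := by
          rw [hab, smul_mul_assoc, inv_smul_smul₀ hc]
      _ = c⁻¹ • ((a - a ^ 2 * ad) * b * (a * ad * ad)) := by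
          rw [ha.mul_mul_self_eq, sub_mul, sq, mul_assoc (a * a), hadb, mul_zero, sub_zero]
      _ = (a - a ^ 2 * ad) * (b * a * ad) * (c⁻¹ • ad) := by
          simp only [mul_smul_comm, mul_assoc]
  rw [← ha.mul_mul_self_eq, ← mul_assoc, ← mul_assoc, ha.2.2.eq_zero_of_eq_mul_mul_left hfix,
    zero_mul]

theorem inv_mul_eq_zero_of_mul_inv_eq_zero [CompleteSpace A] (hb : IsGDrazinInverse b bd)
    (hc : c ≠ 0) (habd : a * bd = 0) (hab : a * b = c • (b * a)) : bd * a = 0 := by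
  have hfix : bd * b * a = (c⁻¹ • bd) * (bd * b * a) * (b - b ^ 2 * bd) := by
    calc bd * b * a = c⁻¹ • (bd * (a * b)) := by
          rw [hab, mul_smul_comm, inv_smul_smul₀ hc, mul_assoc]
      _ = c⁻¹ • (bd * bd * b * (a * (b - b ^ 2 * bd))) := by
          rw [hb.mul_self_mul_eq, mul_sub, (hb.1.pow_left 2).eq, ← mul_assoc a bd, habd,
            zero_mul, sub_zero]
      _ = (c⁻¹ • bd) * (bd * b * a) * (b - b ^ 2 * bd) := by
          simp only [smul_mul_assoc, mul_assoc]
  rw [← hb.mul_self_mul_eq, mul_assoc bd bd b, mul_assoc bd (bd * b) a,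
    hb.2.2.eq_zero_of_eq_mul_mul_right hfix, mul_zero]

theorem add (ha : IsGDrazinInverse a ad) (hb : IsGDrazinInverse b bd) (hadb : ad * b = 0)
    (hbad : b * ad = 0) (habd : a * bd = 0) (hbda : bd * a = 0)
    (hq : IsQuasinilpotent (a - a ^ 2 * ad + (b - b ^ 2 * bd))) :
    IsGDrazinInverse (a + b) (ad + bd) := by
  have hright : (a + b) * (ad + bd) = a * ad + b * bd := by
    simp only [mul_add, add_mul, habd, hbad, add_zero, zero_add]
  have hleft : (ad + bd) * (a + b) = a * ad + b * bd := by
    simp only [mul_add, add_mul, hadb, hbda, ha.1.eq, hb.1.eq, add_zero, zero_add]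
  have habbd : a * (b * bd) = 0 := by rw [hb.1.eq, ← mul_assoc, habd, zero_mul]
  have hbaad : b * (a * ad) = 0 := by rw [ha.1.eq, ← mul_assoc, hbad, zero_mul]
  refine ⟨hright.trans hleft.symm, ?_, ?_⟩
  · rw [hleft, add_mul, mul_add, mul_add, ha.mul_mul_self_eq, hb.mul_mul_self_eq, ha.1.eq,
      hb.1.eq, mul_assoc ad a bd, habd, mul_assoc bd b ad, hbad]
    simp only [mul_zero, add_zero, zero_add]
  · convert hq using 1
    rw [sq, mul_assoc, hright, add_mul, mul_add, mul_add, habbd, hbaad, sq, sq]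
    simp only [mul_assoc]
    abel

end IsGDrazinInverse

/-- explicit formula for `(a+b)ᵈ` under `a*b = λ • (aᵖ*b*a*bᵖ)`. -/
theorem gDrazin_add_formula (a b ad bd : 𝔸) (lam : ℂ) (hlam : lam ≠ 0)
    (ha : IsGDrazinInverse a ad) (hb : IsGDrazinInverse b bd)
    (hab : a * b = lam • ((1 - a * ad) * b * a * (1 - b * bd))) :
    IsGDrazinInverse (a + b)
      ((1 - b * bd) * ad + bd * (1 - a * ad)
        + ∑' n : ℕ, bd ^ (n + 2) * a * (a + b) ^ n * (1 - a * ad)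
        + (1 - b * bd) * ∑' n : ℕ, (a + b) ^ n * b * ad ^ (n + 2)
        - ∑' n : ℕ, ∑' k : ℕ, bd ^ (k + 1) * a * (a + b) ^ (n + k) * b * ad ^ (n + 2)
        - ∑' n : ℕ, bd ^ (n + 2) * a * (a + b) ^ n * b * ad) := by
  have hadb : ad * b = 0 :=
    ha.inv_mul_eq_zero_of_mul_eq_smul_one_sub_mul (by simpa only [mul_assoc] using hab)
  have habd : a * bd = 0 := hb.mul_inv_eq_zero_of_mul_eq_smul_mul_one_sub hab
  have hab' : a * b = lam • (b * a) := by
    have hpa : (1 - a * ad) * b = b := by rw [sub_mul, one_mul, mul_assoc, hadb, mul_zero, sub_zero]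
    have hpb : a * (1 - b * bd) = a := by
      rw [mul_sub, mul_one, hb.1.eq, ← mul_assoc, habd, zero_mul, sub_zero]
    rwa [hpa, mul_assoc, hpb] at hab
  have hbad : b * ad = 0 := ha.mul_inv_eq_zero_of_inv_mul_eq_zero hlam hadb hab'
  have hbda : bd * a = 0 := hb.inv_mul_eq_zero_of_mul_inv_eq_zero hlam habd hab'
  have hq : IsQuasinilpotent (a - a ^ 2 * ad + (b - b ^ 2 * bd)) := by
    refine IsQuasinilpotent.add_of_mul_eq_smul_mul (μ := lam) ?_ ha.2.2 hb.2.2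
    rwa [sub_sq_mul_mul_sub_sq_mul_eq_mul hb.1 hadb habd,
      sub_sq_mul_mul_sub_sq_mul_eq_mul ha.1 hbda hbad]
  convert ha.add hb hadb hbad habd hbda hq using 1
  have hbda_pow (n : ℕ) : bd ^ (n + 1) * a = 0 := by rw [pow_succ, mul_assoc, hbda, mul_zero]
  have hbad_pow (n : ℕ) : b * ad ^ (n + 1) = 0 := by rw [pow_succ', ← mul_assoc, hbad, zero_mul]
  have hpb_ad : (1 - b * bd) * ad = ad := by
    rw [sub_mul, one_mul, hb.1.eq, mul_assoc, hbad, mul_zero, sub_zero]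
  have hbd_pa : bd * (1 - a * ad) = bd := by
    rw [mul_sub, mul_one, ← mul_assoc, hbda, zero_mul, sub_zero]
  simp only [hpb_ad, hbd_pa, hbda_pow, hbad_pow, mul_assoc, zero_mul, mul_zero, tsum_zero,
    add_zero, sub_zero]
end
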